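/- If X is a nonempty metric space with dim_C X = 0, then dim_tC (X × [0,1]) = 1, where X × [0,1] carries the max metric. -/

import Mathlib

open Metric Set Topology
open scoped ENNReal NNReal

noncomputable section

/-- Hausdorff dimension of a set, with the convention that the empty set has dimension `-1`. -/
def hdim {X : Type*} [EMetricSpace X] (s : Set X) : EReal :=
  open scoped Classical in
  if s.Nonempty then ((dimH s : ℝ≥0∞) : EReal) else -1

/-- Hausdorff dimension of a metric space. -/
def hdimSpace (X : Type*) [EMetricSpace X] : EReal :=
  hdim (Set.univ : Set X)

/-- A quasisymmetric embedding between metric spaces: a topological embedding `f` together with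
a homeomorphism `η` of `[0,∞)` such that `d(x,a) ≤ t·d(x,b)` implies
`d(f x, f a) ≤ η t · d(f x, f b)`. -/
def IsQuasisymmetric {X Y : Type*} [MetricSpace X] [MetricSpace Y] (f : X → Y) : Prop :=
  Topology.IsEmbedding f ∧ ∃ η : ℝ≥0 ≃ₜ ℝ≥0, ∀ (x a b : X) (t : ℝ≥0), 0 < t →
    dist x a ≤ (t : ℝ) * dist x b → dist (f x) (f a) ≤ (η t : ℝ) * dist (f x) (f b)

/-- Conformal dimension: infimum of Hausdorff dimensions of quasisymmetric images. -/
def conformalDim (X : Type u) [MetricSpace X] : EReal :=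
  sInf { c : EReal | ∃ (Y : Type u) (_ : MetricSpace Y) (f : X → Y),
    IsQuasisymmetric f ∧ c = hdim (Set.range f) }

/-- Topological conformal dimension. -/
def tcDim (X : Type u) [MetricSpace X] : EReal :=
  sInf { c : EReal | ∃ 𝒰 : Set (Set X), TopologicalSpace.IsTopologicalBasis 𝒰 ∧
    ∀ U ∈ 𝒰, conformalDim ↥(frontier U) ≤ c - 1 }

/-- Topological Hausdorff dimension. -/
def thDim (X : Type*) [MetricSpace X] : EReal :=
  sInf { c : EReal | ∃ 𝒰 : Set (Set X), TopologicalSpace.IsTopologicalBasis 𝒰 ∧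
    ∀ U ∈ 𝒰, hdim (frontier U) ≤ c - 1 }

end

/-!
Since `dim_C X < 1`, some quasisymmetric image `f(X)` has Hausdorff dimension `< 1`; the distances
from `f x` to `f(X)` then miss some radius in every interval `(0, r)`, so `X` has a basis of small
clopen sets `C`. The boxes `C × (a, b)` with `b - a` comparable to `diam C` form a basis of
`X × [0,1]`, and the frontier of such a box lies in two parallel copies of `C` at distance
`b - a ≍ diam C`. For every quasisymmetric `f`, the map `(x, y) ↦ (f x, y · diam f(C) / (b - a))`
is quasisymmetric on these two copies and its image has the dimension of `f(X)`, so each frontier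
has conformal dimension at most `dim_C X = 0`; hence `dim_tC ≤ 1`. Conversely, a basis set
containing `(x, 0)` but not `(x, 1)` has nonempty frontier since `{x} × [0,1]` is connected, and
nonempty spaces have nonnegative conformal dimension, so `dim_tC ≥ 1`.
-/

open Bornology TopologicalSpace

lemma neg_one_le_hdim {Z : Type*} [EMetricSpace Z] (s : Set Z) : -1 ≤ hdim s := by
  unfold hdim
  split_ifs
  · exact le_trans (by norm_num) (EReal.coe_ennreal_nonneg _)
  · exact le_rfl

lemma hdim_nonneg {Z : Type*} [EMetricSpace Z] {s : Set Z} (hs : s.Nonempty) : 0 ≤ hdim s := by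
  simp only [hdim, if_pos hs, EReal.coe_ennreal_nonneg]

lemma hdim_le_hdim_of_dimH_le {Z W : Type*} [EMetricSpace Z] [EMetricSpace W] {s : Set Z}
    {t : Set W} (h : dimH s ≤ dimH t) (ht : t.Nonempty) : hdim s ≤ hdim t := by
  unfold hdim
  split_ifs with hs
  · exact EReal.coe_ennreal_le_coe_ennreal_iff.2 h
  · exact neg_one_le_hdim t |>.trans (by simp [hdim, ht])

lemma hdim_mono {Z : Type*} [EMetricSpace Z] {s t : Set Z} (h : s ⊆ t) : hdim s ≤ hdim t := by
  rcases s.eq_empty_or_nonempty with rfl | hs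
  · simpa [hdim] using neg_one_le_hdim t
  · exact hdim_le_hdim_of_dimH_le (dimH_mono h) (hs.mono h)

lemma dimH_lt_one_of_hdim_lt_one {Z : Type*} [EMetricSpace Z] {s : Set Z} (h : hdim s < 1) :
    dimH s < 1 := by
  rcases s.eq_empty_or_nonempty with rfl | hs
  · simp
  · rw [hdim, if_pos hs, ← EReal.coe_ennreal_one] at h
    exact EReal.coe_ennreal_lt_coe_ennreal_iff.1 h

namespace IsQuasisymmetric

variable {X Y Z : Type*} [MetricSpace X] [MetricSpace Y] [MetricSpace Z]

lemma comp_isometry {f : X → Y} (hf : IsQuasisymmetric f) {φ : Z → X} (hφ : Isometry φ) :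
    IsQuasisymmetric (f ∘ φ) := by
  obtain ⟨hemb, η, hη⟩ := hf
  refine ⟨hemb.comp hφ.isEmbedding, η, fun x a b t ht hle => hη _ _ _ t ht ?_⟩
  rwa [hφ.dist_eq, hφ.dist_eq]

end IsQuasisymmetric

lemma Homeomorph.strictMono_nnreal (η : ℝ≥0 ≃ₜ ℝ≥0) : StrictMono η := by
  refine (η.continuous.strictMono_of_inj η.injective).resolve_right fun hanti => ?_
  obtain ⟨w, hw⟩ := η.surjective (η 0 + 1)
  have hlt : η w < η 0 := hanti (pos_iff_ne_zero.2 fun hw0 => by simp [hw0] at hw)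
  rw [hw] at hlt
  exact (lt_add_one _).not_gt hlt

lemma Homeomorph.map_zero_nnreal (η : ℝ≥0 ≃ₜ ℝ≥0) : η 0 = 0 := by
  obtain ⟨w, hw⟩ := η.surjective 0
  have h := η.strictMono_nnreal.monotone (zero_le (a := w))
  rw [hw] at h
  exact le_antisymm h zero_le

lemma exists_mem_diam_le_four_mul_dist {X : Type*} [MetricSpace X] {C : Set X}
    (hC : IsBounded C) (hCnt : C.Nontrivial) (x : X) : ∃ z ∈ C, diam C ≤ 4 * dist x z := by
  have hpos := diam_pos hCnt hC
  by_contra! hfar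
  have : diam C ≤ diam C / 2 := diam_le_of_forall_dist_le (by positivity) fun w hw w' hw' => by
    linarith [dist_triangle_left w w' x, hfar w hw, hfar w' hw']
  linarith

lemma dimH_prod_pair_le {X : Type*} [EMetricSpace X] (s : Set X) (a b : ℝ) :
    dimH (s ×ˢ {a, b}) ≤ dimH s := by
  have hiso (c : ℝ) : Isometry fun x : X => (x, c) := fun _ _ => by simp [Prod.edist_eq]
  rw [prod_insert, prod_singleton, dimH_union, (hiso a).dimH_image, (hiso b).dimH_image, max_self]

lemma dist_eq_of_mem_prod_pair {X : Type*} [MetricSpace X] {C : Set X} (hC : IsBounded C)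
    {δ : ℝ} (hδ : diam C ≤ δ) {x x' : X} (hx : x ∈ C) (hx' : x' ∈ C) {y y' : ℝ}
    (hy : y ∈ ({0, δ} : Set ℝ)) (hy' : y' ∈ ({0, δ} : Set ℝ)) (hne : y ≠ y') :
    dist (x, y) (x', y') = δ := by
  have hδ0 : 0 ≤ δ := diam_nonneg.trans hδ
  have hyy' : dist y y' = δ := by
    rcases hy with rfl | rfl <;> rcases hy' with rfl | rfl <;>
      simp_all [Real.dist_eq, abs_of_nonneg hδ0]
  rw [Prod.dist_eq, hyy']
  exact max_eq_right ((dist_le_diam_of_mem hC hx hx').trans hδ)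

def QuasisymmetricWith {X Y : Type*} [MetricSpace X] [MetricSpace Y] (η : ℝ≥0 → ℝ≥0)
    (f : X → Y) : Prop :=
  ∀ (x a b : X) (t : ℝ≥0), 0 < t → dist x a ≤ (t : ℝ) * dist x b →
    dist (f x) (f a) ≤ (η t : ℝ) * dist (f x) (f b)

namespace QuasisymmetricWith

variable {X Y : Type*} [MetricSpace X] [MetricSpace Y] {η : ℝ≥0 → ℝ≥0} {f : X → Y}
  {C : Set X}

lemma isBounded_image (hf : QuasisymmetricWith η f) (hC : IsBounded C) : IsBounded (f '' C) := by
  rcases Set.subsingleton_or_nontrivial C with hCs | hCnt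
  · exact (hCs.image f).finite.isBounded
  obtain ⟨x, hx⟩ := hCnt.nonempty
  obtain ⟨z, -, hz⟩ := exists_mem_diam_le_four_mul_dist hC hCnt x
  refine isBounded_closedBall (x := f x) (r := η 4 * dist (f x) (f z)) |>.subset ?_
  rintro _ ⟨w, hw, rfl⟩
  rw [mem_closedBall, dist_comm]
  exact hf x w z 4 (by norm_num) <| by
    push_cast
    linarith [dist_le_diam_of_mem hC hx hw]

lemma dist_le_mul_diam_image (hf : QuasisymmetricWith η f) (hC : IsBounded C)
    (hCnt : C.Nontrivial) {x a : X} (hx : x ∈ C) {s : ℝ≥0} (hs : 0 < s)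
    (h : dist x a ≤ s * diam C) : dist (f x) (f a) ≤ η (4 * s) * diam (f '' C) := by
  obtain ⟨z, hz, hxz⟩ := exists_mem_diam_le_four_mul_dist hC hCnt x
  calc dist (f x) (f a) ≤ η (4 * s) * dist (f x) (f z) :=
        hf x a z _ (by positivity) (by push_cast; nlinarith)
    _ ≤ η (4 * s) * diam (f '' C) := by
        gcongr
        exact dist_le_diam_of_mem (hf.isBounded_image hC) (mem_image_of_mem f hx)
          (mem_image_of_mem f hz)

lemma diam_image_le (hf : QuasisymmetricWith η f) (hC : IsBounded C) {x b : X} (hx : x ∈ C)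
    {t : ℝ≥0} (ht : 0 < t) (h : diam C ≤ t * dist x b) :
    diam (f '' C) ≤ 2 * η t * dist (f x) (f b) := by
  have hnear (w) (hw : w ∈ C) : dist (f x) (f w) ≤ η t * dist (f x) (f b) :=
    hf x w b t ht ((dist_le_diam_of_mem hC hx hw).trans h)
  refine diam_le_of_forall_dist_le (by positivity) ?_
  rintro _ ⟨w, hw, rfl⟩ _ ⟨w', hw', rfl⟩
  linarith [dist_triangle_left (f w) (f w') (f x), hnear w hw, hnear w' hw']

end QuasisymmetricWith

/-- The scaling factor places the two copies of `f '' C` at distance `diam (f '' C)`, matching the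
copies of `C` at distance `δ ≍ diam C`. -/
lemma QuasisymmetricWith.prodMap_mul_prod_pair {X Y : Type*} [MetricSpace X] [MetricSpace Y]
    {η : ℝ≥0 → ℝ≥0} {f : X → Y} (hf : QuasisymmetricWith η f) (hinj : Function.Injective f)
    {C : Set X} (hC : IsBounded C) (hCnt : C.Nontrivial) {δ : ℝ} {K : ℝ≥0} (hδ : diam C ≤ δ)
    (hδK : δ ≤ K * diam C) :
    QuasisymmetricWith (fun t => 2 * η t + η (4 * K * t) + t)
      (Prod.map f (diam (f '' C) / δ * ·) ∘ Subtype.val : ↥(C ×ˢ ({0, δ} : Set ℝ)) → Y × ℝ) := by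
  set D := diam (f '' C)
  have hfC := hf.isBounded_image hC
  have hΔ := diam_pos hCnt hC
  have hD : 0 < D := diam_pos (hCnt.image hinj) hfC
  have hδ0 : 0 < δ := hΔ.trans_le hδ
  have hK : 0 < K := by exact_mod_cast pos_of_mul_pos_left (hδ0.trans_le hδK) hΔ.le
  have hscale (y : ℝ) (hy : y ∈ ({0, δ} : Set ℝ)) : D / δ * y ∈ ({0, D} : Set ℝ) := by
    rcases hy with rfl | rfl <;> simp [hδ0.ne']
  have hscale_ne {y y' : ℝ} (hne : y ≠ y') : D / δ * y ≠ D / δ * y' :=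
    (mul_right_injective₀ (by positivity)).ne hne
  rintro ⟨⟨x, y⟩, hx, hy⟩ ⟨⟨xa, ya⟩, hxa, hya⟩ ⟨⟨xb, yb⟩, hxb, hyb⟩ t ht hle
  simp only [Subtype.dist_eq, Function.comp_apply, Prod.map_apply] at hle ⊢
  have hdistS {x' y'} (hx' : x' ∈ C) (hy' : y' ∈ ({0, δ} : Set ℝ)) (hne : y ≠ y') :=
    dist_eq_of_mem_prod_pair hC hδ hx hx' hy hy' hne
  have hdistT {x' y'} (hx' : x' ∈ C) (hy' : y' ∈ ({0, δ} : Set ℝ)) (hne : y ≠ y') :=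
    dist_eq_of_mem_prod_pair hfC le_rfl (mem_image_of_mem f hx) (mem_image_of_mem f hx')
      (hscale y hy) (hscale y' hy') (hscale_ne hne)
  push_cast
  have hηt := (η t).coe_nonneg
  have hηKt := (η (4 * K * t)).coe_nonneg
  rcases eq_or_ne y ya with rfl | hya' <;> rcases eq_or_ne y yb with rfl | hyb'
  · simp only [dist_prod_same_right] at hle ⊢
    nlinarith [hf x xa xb t ht hle, dist_nonneg (x := f x) (y := f xb)]
  · rw [dist_prod_same_right, hdistT hxb hyb hyb']
    rw [dist_prod_same_right, hdistS hxb hyb hyb'] at hle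
    have hnear := hf.dist_le_mul_diam_image hC hCnt hx (s := K * t) (by positivity) (by
      push_cast
      nlinarith [t.coe_nonneg])
    rw [← mul_assoc] at hnear
    nlinarith
  · rw [dist_prod_same_right, hdistT hxa hya hya']
    rw [dist_prod_same_right, hdistS hxa hya hya'] at hle
    have hdiam := hf.diam_image_le hC hx ht (hδ.trans hle)
    nlinarith [dist_nonneg (x := f x) (y := f xb)]
  · rw [hdistT hxa hya hya', hdistT hxb hyb hyb']
    rw [hdistS hxa hya hya', hdistS hxb hyb hyb'] at hle
    have ht1 : 1 ≤ (t : ℝ) := by nlinarith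
    nlinarith

/-- `φ + id` is a homeomorphism of `ℝ≥0` even when `φ` is not. -/
lemma isQuasisymmetric_of_le_add_id {X Y : Type*} [MetricSpace X] [MetricSpace Y] {f : X → Y}
    (hf : IsEmbedding f) {φ : ℝ≥0 → ℝ≥0} (hφ : Continuous φ) (hφm : Monotone φ) (hφ0 : φ 0 = 0)
    (h : QuasisymmetricWith (fun t => φ t + t) f) : IsQuasisymmetric f := by
  have hmono : StrictMono fun t => φ t + t := hφm.add_strictMono strictMono_id
  have hsurj : Function.Surjective fun t => φ t + t := fun y => by
    obtain ⟨w, -, hw⟩ := intermediate_value_Icc (zero_le (a := y))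
      (hφ.add continuous_id).continuousOn (show y ∈ Icc (φ 0 + 0) (φ y + y) by simp [hφ0])
    exact ⟨w, hw⟩
  exact ⟨hf, (hmono.orderIsoOfSurjective _ hsurj).toHomeomorph, h⟩

section ConformalDim

variable {X Z : Type u} [MetricSpace X] [MetricSpace Z]

lemma conformalDim_le_hdim_range {Y : Type u} [MetricSpace Y] {f : X → Y}
    (hf : IsQuasisymmetric f) : conformalDim X ≤ hdim (range f) :=
  sInf_le ⟨Y, _, f, hf, rfl⟩

lemma le_conformalDim {c : EReal}
    (h : ∀ (Y : Type u) [MetricSpace Y] (f : X → Y), IsQuasisymmetric f → c ≤ hdim (range f)) :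
    c ≤ conformalDim X := by
  refine le_sInf ?_
  rintro _ ⟨Y, _, f, hf, rfl⟩
  exact h Y f hf

lemma conformalDim_nonneg [Nonempty X] : 0 ≤ conformalDim X :=
  le_conformalDim fun _ _ f _ => hdim_nonneg (range_nonempty f)

lemma conformalDim_le_zero_of_finite [Finite X] : conformalDim X ≤ 0 := by
  refine (conformalDim_le_hdim_range (f := id) ⟨IsEmbedding.id, Homeomorph.refl _,
    fun _ _ _ _ _ hle => hle⟩).trans ?_
  rcases isEmpty_or_nonempty X with hX | hX
  · simp [hdim, univ_eq_empty_iff.2 hX]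
  · simp [hdim, finite_univ.dimH_zero]

lemma conformalDim_le_of_isometry {φ : Z → X} (hφ : Isometry φ) :
    conformalDim Z ≤ conformalDim X :=
  le_conformalDim fun _ _ f hf => (conformalDim_le_hdim_range (hf.comp_isometry hφ)).trans
    (hdim_mono (range_comp_subset_range φ f))

end ConformalDim

lemma exists_mem_Ioo_forall_dist_ne {Y : Type*} [MetricSpace Y] {S : Set Y} (hS : dimH S < 1)
    (y : Y) {r : ℝ} (hr : 0 < r) : ∃ ρ ∈ Ioo 0 r, ∀ z ∈ S, dist y z ≠ ρ := by
  by_contra! hcon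
  have hdim : dimH (Ioo 0 r) ≤ dimH (dist y '' S) := dimH_mono hcon
  have hIoo : dimH (Ioo 0 r) = 1 := by
    simpa using Real.dimH_of_nonempty_interior (s := Ioo 0 r) (by simpa [interior_Ioo])
  exact (hIoo ▸ hdim).not_gt (((LipschitzWith.dist_right y).dimH_image_le S).trans_lt hS)

/-- The distances from `f x` to `range f` form a set of dimension `< 1`, so some small sphere
around `f x` misses `range f` and the preimage of the corresponding ball is clopen. -/
lemma Topology.IsEmbedding.isTopologicalBasis_isClopen_of_dimH_lt_one {X Y : Type*}
    [TopologicalSpace X] [MetricSpace Y] {f : X → Y} (hf : IsEmbedding f)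
    (h : dimH (range f) < 1) : IsTopologicalBasis {C : Set X | IsClopen C} := by
  refine isTopologicalBasis_of_isOpen_of_nhds (fun C hC => hC.isOpen) ?_
  intro x U hxU hU
  obtain ⟨V, hV, rfl⟩ := hf.isOpen_iff.mp hU
  obtain ⟨r, hr, hball⟩ := Metric.isOpen_iff.mp hV _ hxU
  obtain ⟨ρ, ⟨hρ0, hρr⟩, hρ⟩ := exists_mem_Ioo_forall_dist_ne h (f x) hr
  have hclosed : f ⁻¹' ball (f x) ρ = f ⁻¹' closedBall (f x) ρ := by
    ext z
    simp only [mem_preimage, mem_ball, mem_closedBall, dist_comm (f z)]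
    exact ⟨le_of_lt, fun hle => hle.lt_of_ne (hρ _ (mem_range_self z))⟩
  refine ⟨f ⁻¹' ball (f x) ρ, ⟨?_, isOpen_ball.preimage hf.continuous⟩, mem_ball_self hρ0,
    preimage_mono ((ball_subset_ball hρr.le).trans hball)⟩
  rw [hclosed]
  exact isClosed_closedBall.preimage hf.continuous

lemma isTopologicalBasis_isClopen_of_conformalDim_lt_one {X : Type u} [MetricSpace X]
    (h : conformalDim X < 1) : IsTopologicalBasis {C : Set X | IsClopen C} := by
  obtain ⟨_, ⟨Y, _, f, hf, rfl⟩, hlt⟩ := sInf_lt_iff.mp h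
  exact hf.1.isTopologicalBasis_isClopen_of_dimH_lt_one (dimH_lt_one_of_hdim_lt_one hlt)

lemma conformalDim_prod_pair_le {X : Type u} [MetricSpace X] {C : Set X} (hC : IsBounded C)
    (hCnt : C.Nontrivial) {δ : ℝ} {K : ℝ≥0} (hδ : diam C ≤ δ) (hδK : δ ≤ K * diam C) :
    conformalDim ↥(C ×ˢ ({0, δ} : Set ℝ)) ≤ conformalDim X := by
  refine le_conformalDim fun Y _ f ⟨hemb, η, (hη : QuasisymmetricWith η f)⟩ => ?_
  have hc : diam (f '' C) / δ ≠ 0 :=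
    (div_pos (diam_pos (hCnt.image hemb.injective) (hη.isBounded_image hC))
      ((diam_pos hCnt hC).trans_le hδ)).ne'
  have hηm := η.strictMono_nnreal.monotone
  have hg : IsQuasisymmetric
      (Prod.map f (diam (f '' C) / δ * ·) ∘ Subtype.val : ↥(C ×ˢ ({0, δ} : Set ℝ)) → Y × ℝ) := by
    refine isQuasisymmetric_of_le_add_id ?_ (φ := fun t => 2 * η t + η (4 * K * t)) (by fun_prop)
      (fun s t hst => by dsimp only; gcongr <;> exact hηm (by gcongr))
      (by simp [η.map_zero_nnreal]) (hη.prodMap_mul_prod_pair hemb.injective hC hCnt hδ hδK)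
    exact (hemb.prodMap (Homeomorph.mulLeft₀ _ hc).isEmbedding).comp IsEmbedding.subtypeVal
  refine (conformalDim_le_hdim_range hg).trans (hdim_le_hdim_of_dimH_le ?_
    ⟨f _, mem_range_self hCnt.nonempty.some⟩)
  refine (dimH_mono ?_).trans (dimH_prod_pair_le (range f) 0 (diam (f '' C)))
  rintro _ ⟨⟨⟨x, y⟩, -, hy : y ∈ ({0, δ} : Set ℝ)⟩, rfl⟩
  refine ⟨mem_range_self x, ?_⟩
  rcases hy with rfl | rfl
  · simp
  · simp [((diam_pos hCnt hC).trans_le hδ).ne']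

lemma one_le_tcDim {Z : Type u} [MetricSpace Z] {s : Set Z} (hs : IsPreconnected s)
    (hsnt : s.Nontrivial) : 1 ≤ tcDim Z := by
  refine le_sInf ?_
  rintro c ⟨𝒱, h𝒱, hc⟩
  obtain ⟨p, hp, q, hq, hpq⟩ := hsnt
  obtain ⟨U, hU, hpU, hUq⟩ := h𝒱.exists_subset_of_mem_open (mem_compl_singleton_iff.2 hpq)
    isOpen_compl_singleton
  have : Nonempty (frontier U) := (nonempty_iff_ne_empty.2 fun hfr =>
    hUq (hs.subset_isClopen (isClopen_iff_frontier_eq_empty.2 hfr) ⟨p, hp, hpU⟩ hq) rfl).to_subtype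
  exact (EReal.sub_nonneg (Or.inr (EReal.coe_ne_top 1)) (Or.inr (EReal.coe_ne_bot 1))).1
    (conformalDim_nonneg.trans (hc U hU))

/-- Comparability of `b - a` with `diam C` is what makes the frontier `C × {a, b}` of such a box
quasisymmetrically no larger than `C`. -/
def balancedBoxes (X : Type*) [MetricSpace X] : Set (Set (X × unitInterval)) :=
  {W | ∃ (C : Set X) (a b : ℝ), IsClopen C ∧ IsBounded C ∧ a < b ∧ diam C ≤ b - a ∧
    (C.Subsingleton ∨ b - a ≤ 2 * diam C) ∧ W = C ×ˢ (Subtype.val ⁻¹' Ioo a b)}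

lemma conformalDim_frontier_le_of_mem_balancedBoxes {X : Type u} [MetricSpace X] [Nonempty X]
    {W : Set (X × unitInterval)} (hW : W ∈ balancedBoxes X) :
    conformalDim (frontier W) ≤ conformalDim X := by
  obtain ⟨C, a, b, hCc, hCb, hab, h1, h2, rfl⟩ := hW
  have hfrontier : frontier (C ×ˢ (Subtype.val ⁻¹' Ioo a b : Set unitInterval)) ⊆
      C ×ˢ (Subtype.val ⁻¹' {a, b}) := by
    rw [frontier_prod_eq, hCc.frontier_eq, hCc.isClosed.closure_eq, empty_prod, union_empty,
      ← frontier_Ioo hab]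
    exact prod_mono_right (continuous_subtype_val.frontier_preimage_subset _)
  have hshift_mem (p : frontier (C ×ˢ (Subtype.val ⁻¹' Ioo a b : Set unitInterval))) :
      (p.1.1, (p.1.2 : ℝ) - a) ∈ C ×ˢ ({0, b - a} : Set ℝ) := by
    obtain ⟨hx, hy | hy⟩ := hfrontier p.2 <;> simp_all
  have hshift : Isometry fun p => (⟨_, hshift_mem p⟩ : ↥(C ×ˢ ({0, b - a} : Set ℝ))) := by
    refine Isometry.of_dist_eq fun p q => ?_
    simp [Subtype.dist_eq, Prod.dist_eq, Real.dist_eq]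
  refine (conformalDim_le_of_isometry hshift).trans ?_
  rcases C.subsingleton_or_nontrivial with hCs | hCnt
  · have : Finite ↥(C ×ˢ ({0, b - a} : Set ℝ)) := (hCs.finite.prod (toFinite _)).to_subtype
    exact conformalDim_le_zero_of_finite.trans conformalDim_nonneg
  · exact conformalDim_prod_pair_le hCb hCnt h1 (K := 2) (h2.resolve_left hCnt.not_subsingleton)

lemma isTopologicalBasis_balancedBoxes {X : Type*} [MetricSpace X]
    (hX : IsTopologicalBasis {C : Set X | IsClopen C}) :
    IsTopologicalBasis (balancedBoxes X) := by
  refine isTopologicalBasis_of_isOpen_of_nhds ?_ ?_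
  · rintro _ ⟨C, a, b, hC, -, -, -, -, rfl⟩
    exact hC.isOpen.prod (isOpen_Ioo.preimage continuous_subtype_val)
  rintro ⟨x, y⟩ V hxyV hV
  obtain ⟨r, hr, hball⟩ := Metric.isOpen_iff.mp hV _ hxyV
  obtain ⟨C, hC, hxC, hCr⟩ := hX.exists_subset_of_mem_open (mem_ball_self (by positivity))
    (isOpen_ball (x := x) (ε := r / 4))
  have hCb : IsBounded C := isBounded_ball.subset hCr
  have hdiam : diam C ≤ r / 2 := by
    linarith [diam_mono hCr isBounded_ball, diam_ball (x := x) (by positivity : 0 ≤ r / 4)]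
  obtain ⟨δ, hδ0, hδr, hCδ, hδC⟩ : ∃ δ, 0 < δ ∧ δ ≤ r / 2 ∧ diam C ≤ δ ∧
      (C.Subsingleton ∨ δ ≤ 2 * diam C) := by
    rcases C.subsingleton_or_nontrivial with hCs | hCnt
    · exact ⟨r / 2, by positivity, le_rfl, hdiam, Or.inl hCs⟩
    · exact ⟨diam C, diam_pos hCnt hCb, hdiam, le_rfl, Or.inr (by linarith [diam_nonneg (s := C)])⟩
  refine ⟨C ×ˢ (Subtype.val ⁻¹' Ioo (y - δ / 2) (y + δ / 2)), ⟨C, _, _, hC, hCb, by linarith,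
    by linarith, hδC.imp_right fun h => by linarith, rfl⟩, ⟨hxC, by simp [hδ0]⟩, ?_⟩
  rintro ⟨x', y'⟩ ⟨hx', hy'⟩
  apply hball
  rw [← ball_prod_same]
  refine ⟨ball_subset_ball (by linarith) (hCr hx'), ?_⟩
  simp only [mem_preimage, mem_Ioo] at hy'
  rw [mem_ball, Subtype.dist_eq, Real.dist_eq, abs_sub_lt_iff]
  constructor <;> linarith

/-- If `dim_C X = 0` then `dim_tC (X × [0,1]) = 1`. -/
theorem stmt10 {X : Type u} [MetricSpace X] [Nonempty X] (h : conformalDim X = 0) :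
    tcDim (X × unitInterval) = 1 := by
  have hX := isTopologicalBasis_isClopen_of_conformalDim_lt_one (h ▸ zero_lt_one)
  refine le_antisymm
    (sInf_le ⟨balancedBoxes X, isTopologicalBasis_balancedBoxes hX, fun W hW => ?_⟩) ?_
  · calc conformalDim (frontier W) ≤ conformalDim X :=
          conformalDim_frontier_le_of_mem_balancedBoxes hW
      _ = 1 - 1 := h.trans (EReal.sub_self (EReal.coe_ne_top 1) (EReal.coe_ne_bot 1)).symm
  · obtain ⟨x⟩ := ‹Nonempty X›
    exact one_le_tcDim (isPreconnected_range (Continuous.prodMk_right x))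
      ⟨_, mem_range_self 0, _, mem_range_self 1, by simp⟩
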